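/- arXiv:1101.4092 — 3 statements merged into one kernel-verified Lean document; each statement's English description precedes it below -/
import Mathlib

section
/- In the group Γ_{2k-1} = ⟨x, y, t | [x,y]^((2k-1)²), [[x,y],x], [[x,y],y], t x t⁻¹ = x⁻¹, t y t⁻¹ = y⁻¹⟩, the commutator subgroup [Γ_{2k-1}, Γ_{2k-1}] equals the subgroup generated by x² and y². -/
inductive Gen : Type
  | x | y | t

open FreeGroup commutatorElement in
/-- Relations of `Γ_m = ⟨x, y, t | [x,y]^(m²), [[x,y],x], [[x,y],y],
t x t⁻¹ = x⁻¹, t y t⁻¹ = y⁻¹⟩` (with `m = 2k-1`). -/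
def gammaRelsM (m : ℕ) : Set (FreeGroup Gen) :=
  { ⁅of Gen.x, of Gen.y⁆ ^ (m ^ 2),
    ⁅⁅of Gen.x, of Gen.y⁆, of Gen.x⁆,
    ⁅⁅of Gen.x, of Gen.y⁆, of Gen.y⁆,
    of Gen.t * of Gen.x * (of Gen.t)⁻¹ * of Gen.x,
    of Gen.t * of Gen.y * (of Gen.t)⁻¹ * of Gen.y }

/-!
Write `c = ⁅x, y⁆` and `N = ⟨x², y²⟩`. The relation `t x t⁻¹ = x⁻¹` gives `x² = ⁅x, t⁆`, and
likewise for `y`, so `N ≤ [Γ, Γ]`. Since `c` commutes with `x` and `y`, `⁅x², y²⁆ = c⁴`, and as the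
order of `c` is odd this puts `c` in `N`. Conjugation by `x`, `y`, `t` then maps `N` into itself
(`x y² x⁻¹ = c² y²`, `t x² t⁻¹ = x⁻²`, ...), so `N` is normal, and `Γ ⧸ N` is generated by the
pairwise commuting images of `x`, `y`, `t`; hence `[Γ, Γ] ≤ N`.
-/

open commutatorElement Subgroup

variable {G : Type*} [Group G]

theorem Subgroup.mem_of_pow_mem_of_coprime {H : Subgroup G} {g : G} {a b : ℕ}
    (hab : a.Coprime b) (ha : g ^ a ∈ H) (hb : g ^ b ∈ H) : g ∈ H := by
  have hbezout : ((1 : ℕ) : ℤ) = a * a.gcdA b + b * a.gcdB b := hab ▸ Nat.gcd_eq_gcd_ab a b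
  rw [← zpow_one g, ← Nat.cast_one, hbezout, zpow_add, zpow_mul, zpow_mul]
  exact mul_mem (zpow_mem (by exact_mod_cast ha) _) (zpow_mem (by exact_mod_cast hb) _)

theorem Subgroup.inv_mul_mul_mem_of_sq_mem {H : Subgroup G} {s u : G} (hs : s ^ 2 ∈ H)
    (h : s * u * s⁻¹ ∈ H) : s⁻¹ * u * s ∈ H := by
  have hconj : s⁻¹ * u * s = (s ^ 2)⁻¹ * (s * u * s⁻¹) * s ^ 2 := by group
  rw [hconj]
  exact mul_mem (mul_mem (inv_mem hs) h) hs

theorem Subgroup.mul_mul_inv_mem_of_commutatorElement_mem {H : Subgroup G} {s u : G}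
    (hsu : ⁅s, u⁆ ∈ H) (hu : u ∈ H) : s * u * s⁻¹ ∈ H := by
  have hconj : s * u * s⁻¹ = ⁅s, u⁆ * u := by rw [commutatorElement_def]; group
  rw [hconj]
  exact mul_mem hsu hu

theorem Subgroup.closure_normal_of_conj_mem {S T : Set G} (hS : closure S = ⊤)
    (hST : ∀ s ∈ S, ∀ u ∈ T, s * u * s⁻¹ ∈ closure T ∧ s⁻¹ * u * s ∈ closure T) :
    (closure T).Normal := by
  have hconj : ∀ g : G, (∀ u ∈ T, g * u * g⁻¹ ∈ closure T) →
      ∀ h ∈ closure T, g * h * g⁻¹ ∈ closure T := fun g hg =>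
    (closure_le ((closure T).comap (MulAut.conj g).toMonoidHom)).2 hg
  rw [← normalizer_eq_top_iff, eq_top_iff, ← hS, closure_le]
  intro s hs
  refine mem_normalizer_iff.2 fun h => ⟨hconj s (fun u hu => (hST s hs u hu).1) h, fun hh => ?_⟩
  have := hconj s⁻¹ (fun u hu => by simpa using (hST s hs u hu).2) _ hh
  simpa [mul_assoc] using this

theorem Subgroup.commutator_le_of_pairwise_commutatorElement_mem {N : Subgroup G} [N.Normal]
    {S : Set G} (hS : closure S = ⊤) (hSN : S.Pairwise fun a b => ⁅a, b⁆ ∈ N) :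
    _root_.commutator G ≤ N := by
  rw [← Normal.quotient_commutative_iff_commutator_le]
  set π := QuotientGroup.mk' N
  have hgen : closure (π '' S) = ⊤ := by
    rw [← MonoidHom.map_closure, hS, ← MonoidHom.range_eq_map, MonoidHom.range_eq_top]
    exact QuotientGroup.mk'_surjective N
  have hcomm : ∀ a ∈ π '' S, ∀ b ∈ π '' S, a * b = b * a := by
    rintro _ ⟨a, ha, rfl⟩ _ ⟨b, hb, rfl⟩
    obtain rfl | hab := eq_or_ne a b
    · rfl
    rw [← commutatorElement_eq_one_iff_mul_comm, ← map_commutatorElement, QuotientGroup.mk'_apply,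
      QuotientGroup.eq_one_iff]
    exact hSN ha hb hab
  have hcentral := closure_le_centralizer_centralizer (π '' S)
  rw [hgen] at hcentral
  exact ⟨⟨fun a b => Set.centralizer_centralizer_comm_of_comm hcomm
    a (hcentral (mem_top a)) b (hcentral (mem_top b))⟩⟩

section ClassTwo

variable {a b : G}

theorem commutatorElement_pow_right (hb : Commute ⁅a, b⁆ b) (n : ℕ) : ⁅a, b ^ n⁆ = ⁅a, b⁆ ^ n := by
  have hconj : a * b * a⁻¹ = ⁅a, b⁆ * b := by rw [commutatorElement_def]; group
  rw [commutatorElement_def, ← conj_pow, hconj, hb.mul_pow, mul_inv_cancel_right]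

theorem commutatorElement_pow_left (ha : Commute ⁅a, b⁆ a) (n : ℕ) : ⁅a ^ n, b⁆ = ⁅a, b⁆ ^ n := by
  have ha' : Commute ⁅b, a⁆ a := by rw [← commutatorElement_inv]; exact ha.inv_left
  rw [← commutatorElement_inv, commutatorElement_pow_right ha', ← commutatorElement_inv, inv_pow,
    inv_inv]

end ClassTwo

section ConjInv

variable {t x : G}

theorem inv_mul_mul_eq_inv_of_mul_mul_inv_eq_inv (h : t * x * t⁻¹ = x⁻¹) : t⁻¹ * x * t = x⁻¹ := by
  conv_lhs => rw [← inv_inv x, ← h]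
  group

theorem mul_pow_mul_inv_eq_inv_of_mul_mul_inv_eq_inv (h : t * x * t⁻¹ = x⁻¹) (n : ℕ) :
    t * x ^ n * t⁻¹ = (x ^ n)⁻¹ := by
  rw [← conj_pow, h, inv_pow]

theorem inv_mul_pow_mul_eq_inv_of_mul_mul_inv_eq_inv (h : t * x * t⁻¹ = x⁻¹) (n : ℕ) :
    t⁻¹ * x ^ n * t = (x ^ n)⁻¹ := by
  have h' : t⁻¹ * x * t⁻¹⁻¹ = x⁻¹ := by
    rw [inv_inv]; exact inv_mul_mul_eq_inv_of_mul_mul_inv_eq_inv h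
  simpa using mul_pow_mul_inv_eq_inv_of_mul_mul_inv_eq_inv h' n

theorem sq_eq_commutatorElement_of_mul_mul_inv_eq_inv (h : t * x * t⁻¹ = x⁻¹) : x ^ 2 = ⁅x, t⁆ := by
  calc x ^ 2 = x * (t * x * t⁻¹)⁻¹ := by rw [h, inv_inv, sq]
    _ = ⁅x, t⁆ := by rw [commutatorElement_def]; group

end ConjInv

section Gamma

variable {x y t : G}

theorem commutatorElement_mem_closure_sq_sq (hcx : Commute ⁅x, y⁆ x) (hcy : Commute ⁅x, y⁆ y)
    {n : ℕ} (hn : Odd n) (hc : ⁅x, y⁆ ^ n = 1) : ⁅x, y⁆ ∈ closure {x ^ 2, y ^ 2} := by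
  have hx2 : x ^ 2 ∈ closure {x ^ 2, y ^ 2} := subset_closure (by simp)
  have hy2 : y ^ 2 ∈ closure {x ^ 2, y ^ 2} := subset_closure (by simp)
  have hc4 : ⁅x, y⁆ ^ 4 = ⁅x ^ 2, y ^ 2⁆ := by
    rw [commutatorElement_pow_left (by rw [commutatorElement_pow_right hcy]; exact hcx.pow_left 2),
      commutatorElement_pow_right hcy, ← pow_mul]
  refine mem_of_pow_mem_of_coprime (a := 2 ^ 2) (Nat.Coprime.pow_left 2 (Nat.coprime_two_left.2 hn))
    ?_ (by rw [hc]; exact one_mem _)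
  rw [hc4, commutatorElement_def]
  exact mul_mem (mul_mem (mul_mem hx2 hy2) (inv_mem hx2)) (inv_mem hy2)

theorem closure_sq_sq_normal (hgen : closure {x, y, t} = ⊤) (hcx : Commute ⁅x, y⁆ x)
    (hcy : Commute ⁅x, y⁆ y) (htx : t * x * t⁻¹ = x⁻¹) (hty : t * y * t⁻¹ = y⁻¹)
    (hcN : ⁅x, y⁆ ∈ closure {x ^ 2, y ^ 2}) : (closure {x ^ 2, y ^ 2}).Normal := by
  have hx2 : x ^ 2 ∈ closure {x ^ 2, y ^ 2} := subset_closure (by simp)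
  have hy2 : y ^ 2 ∈ closure {x ^ 2, y ^ 2} := subset_closure (by simp)
  have hxy : x * y ^ 2 * x⁻¹ ∈ closure {x ^ 2, y ^ 2} :=
    mul_mul_inv_mem_of_commutatorElement_mem
      (by rw [commutatorElement_pow_right hcy]; exact pow_mem hcN 2) hy2
  have hyx : y * x ^ 2 * y⁻¹ ∈ closure {x ^ 2, y ^ 2} := by
    have hcx' : Commute ⁅y, x⁆ x := by rw [← commutatorElement_inv]; exact hcx.inv_left
    refine mul_mul_inv_mem_of_commutatorElement_mem ?_ hx2
    rw [commutatorElement_pow_right hcx', ← commutatorElement_inv]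
    exact pow_mem (inv_mem hcN) 2
  refine closure_normal_of_conj_mem hgen ?_
  rintro s (rfl | rfl | rfl) u (rfl | rfl)
  · rw [(Commute.self_pow s 2).mul_inv_cancel, (Commute.self_pow s 2).inv_mul_cancel]
    exact ⟨hx2, hx2⟩
  · exact ⟨hxy, inv_mul_mul_mem_of_sq_mem hx2 hxy⟩
  · exact ⟨hyx, inv_mul_mul_mem_of_sq_mem hy2 hyx⟩
  · rw [(Commute.self_pow s 2).mul_inv_cancel, (Commute.self_pow s 2).inv_mul_cancel]
    exact ⟨hy2, hy2⟩
  · rw [mul_pow_mul_inv_eq_inv_of_mul_mul_inv_eq_inv htx,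
      inv_mul_pow_mul_eq_inv_of_mul_mul_inv_eq_inv htx]
    exact ⟨inv_mem hx2, inv_mem hx2⟩
  · rw [mul_pow_mul_inv_eq_inv_of_mul_mul_inv_eq_inv hty,
      inv_mul_pow_mul_eq_inv_of_mul_mul_inv_eq_inv hty]
    exact ⟨inv_mem hy2, inv_mem hy2⟩

theorem commutator_eq_closure_sq_sq (hgen : closure {x, y, t} = ⊤) (hcx : Commute ⁅x, y⁆ x)
    (hcy : Commute ⁅x, y⁆ y) (htx : t * x * t⁻¹ = x⁻¹) (hty : t * y * t⁻¹ = y⁻¹) {n : ℕ}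
    (hn : Odd n) (hc : ⁅x, y⁆ ^ n = 1) : _root_.commutator G = closure {x ^ 2, y ^ 2} := by
  have hcN := commutatorElement_mem_closure_sq_sq hcx hcy hn hc
  have := closure_sq_sq_normal hgen hcx hcy htx hty hcN
  have hx2 : x ^ 2 = ⁅x, t⁆ := sq_eq_commutatorElement_of_mul_mul_inv_eq_inv htx
  have hy2 : y ^ 2 = ⁅y, t⁆ := sq_eq_commutatorElement_of_mul_mul_inv_eq_inv hty
  apply le_antisymm
  · have : Std.Symm fun a b : G => ⁅a, b⁆ ∈ closure {x ^ 2, y ^ 2} :=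
      ⟨fun a b h => by rw [← commutatorElement_inv]; exact inv_mem h⟩
    refine commutator_le_of_pairwise_commutatorElement_mem hgen ?_
    simp only [Set.pairwise_insert_of_symm, Set.pairwise_singleton, Set.mem_insert_iff,
      Set.mem_singleton_iff, forall_eq_or_imp, forall_eq, true_and, ← hx2, ← hy2]
    exact ⟨fun _ => subset_closure (by simp), fun _ => hcN, fun _ => subset_closure (by simp)⟩
  · rw [closure_le, commutator_def]
    rintro _ (rfl | rfl)
    · rw [hx2]; exact commutator_mem_commutator (mem_top x) (mem_top t)
    · rw [hy2]; exact commutator_mem_commutator (mem_top y) (mem_top t)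

end Gamma

/-- In `Γ_{2k-1}`, the commutator subgroup equals the subgroup generated by
`x²` and `y²`. -/
theorem stmt_4 (k : ℕ) (hk : 1 ≤ k) :
    commutator (PresentedGroup (gammaRelsM (2 * k - 1))) =
      Subgroup.closure
        { PresentedGroup.of Gen.x ^ 2, PresentedGroup.of Gen.y ^ 2 } := by
  set R := gammaRelsM (2 * k - 1) with hR
  have hof : ∀ a, PresentedGroup.mk R (FreeGroup.of a) = PresentedGroup.of a := fun _ => rfl
  have hrels : ∀ r ∈ R, PresentedGroup.mk R r = 1 := fun _ => PresentedGroup.one_of_mem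
  simp only [hR, gammaRelsM, Set.mem_insert_iff, Set.mem_singleton_iff, forall_eq_or_imp, forall_eq,
    map_pow, map_mul, map_inv, map_commutatorElement, hof] at hrels
  obtain ⟨hc, hcx, hcy, htx, hty⟩ := hrels
  have hgen : Subgroup.closure {PresentedGroup.of Gen.x, PresentedGroup.of Gen.y,
      PresentedGroup.of Gen.t} = (⊤ : Subgroup (PresentedGroup R)) :=
    eq_top_iff.2 fun g _ =>
      PresentedGroup.generated_by _ _ (fun a => Subgroup.subset_closure (by cases a <;> simp)) g
  exact commutator_eq_closure_sq_sq hgen (commutatorElement_eq_one_iff_commute.1 hcx)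
    (commutatorElement_eq_one_iff_commute.1 hcy) (eq_inv_of_mul_eq_one_left htx)
    (eq_inv_of_mul_eq_one_left hty) (Odd.pow ⟨k - 1, by omega⟩) hc
end

section
/- If A is a module over the group ring RG on which G acts trivially, then A is a Cohn local RG-module: for every homomorphism α : F₀ → F₁ of finitely generated free RG-modules of equal rank such that 1_R ⊗ α : R ⊗_{RG} F₀ → R ⊗_{RG} F₁ is an isomorphism, and every f : F₀ → A, there is a unique g : F₁ → A with f = g ∘ α. -/
/-!
Since `G` acts trivially on `A`, the group ring acts on `A` through the augmentation
`ε : RG → R`, so an `RG`-linear map `h : RG^n → A` only sees the augmentation of its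
argument; in particular `h ∘ γ = h` whenever the augmented matrix of `γ` is `1`. Lifting the
inverse of `ε(α)` along `R → RG` gives `β` with `ε(αβ) = ε(βα) = 1`, so precomposition with
`β` is a two-sided inverse of precomposition with `α`.
-/

open MonoidAlgebra Matrix LinearMap

section

variable {R G A ι : Type*} [CommRing R] [Monoid G] [AddCommGroup A]
  [Module (MonoidAlgebra R G) A] [Fintype ι] [DecidableEq ι]

local notation "ε" => MonoidAlgebra.lift R R G 1

theorem MonoidAlgebra.smul_eq_algebraMap_lift_one_smul
    (htriv : ∀ (g : G) (a : A), of R G g • a = a) (x : MonoidAlgebra R G) (a : A) :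
    x • a = algebraMap R (MonoidAlgebra R G) (ε x) • a := by
  induction x using MonoidAlgebra.induction_linear with
  | zero => simp
  | add x y hx hy => rw [add_smul, hx, hy, map_add, map_add, add_smul]
  | single g c => rw [single_eq_algebraMap_mul_of, mul_smul, htriv, map_mul, lift_of]; simp

theorem LinearMap.apply_eq_of_forall_lift_one_eq
    (htriv : ∀ (g : G) (a : A), of R G g • a = a)
    (h : (ι → MonoidAlgebra R G) →ₗ[MonoidAlgebra R G] A) {v w : ι → MonoidAlgebra R G}
    (hvw : ∀ i, ε (v i) = ε (w i)) : h v = h w := by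
  rw [h.pi_apply_eq_sum_univ v, h.pi_apply_eq_sum_univ w]
  simp only [smul_eq_algebraMap_lift_one_smul htriv (v _),
    smul_eq_algebraMap_lift_one_smul htriv (w _), hvw]

theorem LinearMap.comp_eq_self_of_toMatrixRight'_map_lift_one_eq_one
    (htriv : ∀ (g : G) (a : A), of R G g • a = a)
    (h : (ι → MonoidAlgebra R G) →ₗ[MonoidAlgebra R G] A)
    {γ : (ι → MonoidAlgebra R G) →ₗ[MonoidAlgebra R G] (ι → MonoidAlgebra R G)}
    (hγ : (toMatrixRight' γ).map ε = 1) : h ∘ₗ γ = h := by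
  ext i
  refine h.apply_eq_of_forall_lift_one_eq htriv fun j => ?_
  have hij : ε (γ (Pi.single i 1) j) = (1 : Matrix ι ι R) i j := congrFun (congrFun hγ i) j
  simp [hij, one_apply, Pi.single_apply, eq_comm]

theorem MonoidAlgebra.exists_toMatrixRight'_comp_map_lift_one_eq_one
    (α : (ι → MonoidAlgebra R G) →ₗ[MonoidAlgebra R G] (ι → MonoidAlgebra R G))
    (hα : IsUnit ((toMatrixRight' α).map ε)) :
    ∃ β : (ι → MonoidAlgebra R G) →ₗ[MonoidAlgebra R G] (ι → MonoidAlgebra R G),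
      (toMatrixRight' (α ∘ₗ β)).map ε = 1 ∧ (toMatrixRight' (β ∘ₗ α)).map ε = 1 := by
  set M := (toMatrixRight' α).map ε
  have hdet : IsUnit M.det := (isUnit_iff_isUnit_det M).mp hα
  have hlift : (M⁻¹.map (algebraMap R (MonoidAlgebra R G))).map ε = M⁻¹ := by
    rw [Matrix.map_map]; ext; simp
  refine ⟨toMatrixRight'.symm (M⁻¹.map (algebraMap R (MonoidAlgebra R G))), ?_, ?_⟩
  all_goals
    rw [toMatrixRight'_comp, LinearEquiv.apply_symm_apply, ← AlgHom.coe_toRingHom,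
      Matrix.map_mul, AlgHom.coe_toRingHom, hlift]
  · exact nonsing_inv_mul M hdet
  · exact mul_nonsing_inv M hdet

end

/-- If `A` is a module over the group ring `RG` on which `G` acts trivially, then `A`
is a Cohn local `RG`-module: for every `RG`-linear map `α : F₀ → F₁` between finitely
generated free `RG`-modules of equal rank which becomes an isomorphism after applying
`R ⊗_{RG} -` (equivalently, whose matrix becomes invertible under the augmentation
`ε : RG → R`), and every `f : F₀ → A`, there is a unique `g : F₁ → A` with
`f = g ∘ α`. -/
theorem stmt_13 (R : Type) [CommRing R] (G : Type) [Group G]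
    (A : Type) [AddCommGroup A] [Module (MonoidAlgebra R G) A]
    (htriv : ∀ (g : G) (a : A), (MonoidAlgebra.of R G g) • a = a)
    (n : ℕ)
    (α : (Fin n → MonoidAlgebra R G) →ₗ[MonoidAlgebra R G]
          (Fin n → MonoidAlgebra R G))
    (hα : Function.Bijective (fun (v : Fin n → R) (i : Fin n) =>
      ∑ j : Fin n, (MonoidAlgebra.lift R R G 1) ((α (Pi.single j 1)) i) * v j))
    (f : (Fin n → MonoidAlgebra R G) →ₗ[MonoidAlgebra R G] A) :
    ∃! g : (Fin n → MonoidAlgebra R G) →ₗ[MonoidAlgebra R G] A,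
      f = g.comp α := by
  -- the map in `hα` is `v ↦ ε(α)ᵀ *ᵥ v`
  have hunit : IsUnit ((toMatrixRight' α).map (lift R R G 1)) :=
    (isUnit_transpose _).mp (mulVec_surjective_iff_isUnit.mp hα.surjective)
  obtain ⟨β, hαβ, hβα⟩ := exists_toMatrixRight'_comp_map_lift_one_eq_one α hunit
  refine ⟨f ∘ₗ β, ?_, fun g hg => ?_⟩
  · show f = f ∘ₗ β ∘ₗ α
    rw [f.comp_eq_self_of_toMatrixRight'_map_lift_one_eq_one htriv hβα]
  · rw [hg, LinearMap.comp_assoc, g.comp_eq_self_of_toMatrixRight'_map_lift_one_eq_one htriv hαβ]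
end

section
/- Let R be a subring of ℤ_(2) and let ℤ^t_(2) denote ℤ_(2) as a module over R[ℤ] = R[t, t⁻¹] where t acts by negation. Then ℤ^t_(2) is a Cohn local R[ℤ]-module: for any square matrix A(t) over R[t^{±1}] with A(1) invertible over R, the matrix A(-1) is invertible over ℤ_(2). -/
/-- The localization `ℤ_(2)` of `ℤ` at `2`, as a subring of `ℚ`:
rationals with odd (reduced) denominator. -/
def Zloc2 : Subring ℚ where
  carrier := {q | q.den.Coprime 2}
  zero_mem' := by simp [Set.mem_setOf_eq, Nat.coprime_one_left]
  one_mem' := by simp [Set.mem_setOf_eq, Nat.coprime_one_left]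
  add_mem' := by
    intro a b ha hb
    exact Nat.Coprime.coprime_dvd_left (Rat.add_den_dvd a b) (Nat.Coprime.mul ha hb)
  mul_mem' := by
    intro a b ha hb
    exact Nat.Coprime.coprime_dvd_left (Rat.mul_den_dvd a b) (Nat.Coprime.mul ha hb)
  neg_mem' := by
    intro a ha
    simpa [Set.mem_setOf_eq, Rat.den_neg_eq_den] using ha

/-- `-1` as a unit of a commutative ring. -/
def negOneUnit (R : Type*) [CommRing R] : Rˣ :=
  ⟨-1, -1, by ring, by ring⟩

/-- Evaluation of a Laurent polynomial at a unit `u` of `R`: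
`∑ aₙ Tⁿ ↦ ∑ aₙ uⁿ`. -/
noncomputable def lEval {R : Type*} [CommRing R] (u : Rˣ) (f : LaurentPolynomial R) : R :=
  f.coeff.sum fun n a => a * ((u ^ n : Rˣ) : R)

def Subring.ratCastHom {α : Type*} [DivisionRing α] (S : Subring ℚ)
    (hS : ∀ q ∈ S, (q.den : α) ≠ 0) : S →+* α where
  toFun q := ((q : ℚ) : α)
  map_one' := Rat.cast_one
  map_mul' p q := Rat.cast_mul_of_ne_zero (hS _ p.2) (hS _ q.2)
  map_zero' := Rat.cast_zero
  map_add' p q := Rat.cast_add_of_ne_zero (hS _ p.2) (hS _ q.2)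

theorem den_cast_ne_zero_of_mem_Zloc2 {q : ℚ} (hq : q ∈ Zloc2) : (q.den : ZMod 2) ≠ 0 := by
  rw [Ne, ZMod.natCast_eq_zero_iff_even, Nat.not_even_iff_odd]
  exact Nat.coprime_two_right.mp hq

noncomputable def Zloc2.residue : Zloc2 →+* ZMod 2 :=
  Zloc2.ratCastHom fun _ hq => den_cast_ne_zero_of_mem_Zloc2 hq

theorem inv_mem_Zloc2 {q : ℚ} (hq : Odd q.num) : q⁻¹ ∈ Zloc2 := by
  have hnum : q.num ≠ 0 := fun h => by simp [h] at hq
  change q⁻¹.den.Coprime 2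
  rw [Rat.den_inv, if_neg hnum, Nat.coprime_two_right]
  exact Int.natAbs_odd.mpr hq

instance : IsLocalHom Zloc2.residue := by
  refine ⟨fun x hx => ?_⟩
  have hnum : ((x : ℚ).num : ZMod 2) ≠ 0 := by
    intro h
    apply hx.ne_zero
    change (((x : ℚ)) : ZMod 2) = 0
    rw [Rat.cast_def, h, zero_div]
  have hx0 : (x : ℚ) ≠ 0 := fun h => hnum (by simp [h])
  rw [Ne, ZMod.intCast_eq_zero_iff_even, Int.not_even_iff_odd] at hnum
  exact isUnit_iff_exists_inv.mpr
    ⟨⟨(x : ℚ)⁻¹, inv_mem_Zloc2 hnum⟩, Subtype.ext (mul_inv_cancel₀ hx0)⟩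

section LaurentEval

variable {S T : Type*} [CommRing S] [CommRing T] (φ : S →+* T) {u v : Sˣ}

theorem map_lEval_eq_of_map_eq (h : φ u = φ v) (f : LaurentPolynomial S) :
    φ (lEval u f) = φ (lEval v f) := by
  have hpow : ∀ n : ℤ, φ ((u ^ n : Sˣ) : S) = φ ((v ^ n : Sˣ) : S) := by
    intro n
    have huv : Units.map (φ : S →* T) u = Units.map (φ : S →* T) v := Units.ext h
    have := congrArg (fun w : Tˣ => ((w ^ n : Tˣ) : T)) huv
    simpa only [← map_zpow, Units.coe_map, MonoidHom.coe_coe] using this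
  simp only [lEval, Finsupp.sum, map_sum, map_mul, hpow]

theorem map_det_map_lEval_eq_of_map_eq {ι : Type*} [Fintype ι] [DecidableEq ι] (h : φ u = φ v)
    (A : Matrix ι ι (LaurentPolynomial S)) :
    φ (A.map (lEval u)).det = φ (A.map (lEval v)).det := by
  simp only [RingHom.map_det, RingHom.mapMatrix_apply, Matrix.map_map]
  congr 2
  funext f
  exact map_lEval_eq_of_map_eq φ h f

end LaurentEval

/-- Let `R ⊆ ℤ_(2)` be a subring and let `ℤ^t_(2)` be `ℤ_(2)` as an
`R[t,t⁻¹]`-module with `t` acting by negation.  The key Cohn-locality property of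
`ℤ^t_(2)`: for any square matrix `A(t)` over `R[t,t⁻¹]` such that `A(1)` is
invertible over `R`, the matrix `A(-1)` is invertible over `ℤ_(2)`. -/
theorem stmt_14 (R : Subring ℚ) (hR : R ≤ Zloc2) (n : ℕ)
    (A : Matrix (Fin n) (Fin n) (LaurentPolynomial ↥R))
    (h1 : IsUnit (A.map (lEval 1))) :
    IsUnit ((A.map (lEval (negOneUnit ↥R))).map (Subring.inclusion hR)) := by
  rw [Matrix.isUnit_iff_isUnit_det] at h1 ⊢
  rw [← RingHom.mapMatrix_apply, ← RingHom.map_det]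
  apply isUnit_of_map_unit Zloc2.residue
  -- In `𝔽₂` we have `-1 = 1`, so `A(-1)` and `A(1)` have the same determinant mod 2.
  have hsign : (Zloc2.residue.comp (Subring.inclusion hR)) (negOneUnit R : R)
      = (Zloc2.residue.comp (Subring.inclusion hR)) ((1 : Rˣ) : R) := by
    simp only [negOneUnit, Units.val_one, map_neg, map_one]
    decide
  rw [← RingHom.comp_apply, map_det_map_lEval_eq_of_map_eq _ hsign]
  exact h1.map _
end
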